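/- arXiv:1009.0256 — 10 statements merged into one kernel-verified Lean document; each statement's English description precedes it below -/
import Mathlib

section
/- Let R and k be positive real constants and set c = log₂(k/2). If p : ℝ → ℝ is periodic with period 1, then the function f defined on (1/R, ∞) by f(x) = ((ln(xR))^c / (xR)) · p(log₂(ln(xR))) satisfies the functional equation f(x²R) = (k/(2xR))·f(x) for every x > 1/R. -/
open Real

/-- In the variable `u = xR` the function of the theorem is `f x = logPeriodicProfile c p (x * R)`. -/
noncomputable def logPeriodicProfile (c : ℝ) (p : ℝ → ℝ) (u : ℝ) : ℝ :=
  (log u) ^ c / u * p (logb 2 (log u))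

lemma logb_two_mul {t : ℝ} (ht : t ≠ 0) : logb 2 (2 * t) = logb 2 t + 1 := by
  rw [logb_mul two_ne_zero ht, logb_self_eq_one one_lt_two, add_comm]

/-- Squaring `u` doubles `ln u`: the factor `2` is absorbed by `p` as the shift `log₂ ↦ log₂ + 1`,
and leaves `2^c` in front of the power. -/
lemma logPeriodicProfile_sq {c : ℝ} {p : ℝ → ℝ} (hp : Function.Periodic p 1) {u : ℝ}
    (hu : 1 < u) :
    logPeriodicProfile c p (u ^ 2) = 2 ^ c / u * logPeriodicProfile c p u := by
  have hlog : 0 < log u := log_pos hu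
  have hu0 : 0 < u := zero_lt_one.trans hu
  have hlog_sq : log (u ^ 2) = 2 * log u := by rw [log_pow]; norm_num
  unfold logPeriodicProfile
  rw [hlog_sq, mul_rpow zero_le_two hlog.le, logb_two_mul hlog.ne', hp]
  field_simp

/-- For `R, k > 0`, `c = log₂(k/2)`, and `p` periodic with period 1,
the function `f(x) = ((ln(xR))^c / (xR)) · p(log₂(ln(xR)))` on `(1/R, ∞)` satisfies
`f(x²R) = (k/(2xR))·f(x)` for all `x > 1/R`. -/
theorem stmt1 (R k : ℝ) (hR : 0 < R) (hk : 0 < k)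
    (c : ℝ) (hc : c = Real.logb 2 (k / 2))
    (p : ℝ → ℝ) (hper : ∀ s, p (s + 1) = p s)
    (f : ℝ → ℝ)
    (hf : ∀ x, 1 / R < x →
      f x = ((Real.log (x * R)) ^ c / (x * R)) * p (Real.logb 2 (Real.log (x * R)))) :
    ∀ x, 1 / R < x → f (x ^ 2 * R) = (k / (2 * x * R)) * f x := by
  intro x hx
  have hxR : 1 < x * R := by rwa [div_lt_iff₀ hR] at hx
  have hx2 : 1 / R < x ^ 2 * R := by
    rw [div_lt_iff₀ hR]
    nlinarith
  have h2c : (2 : ℝ) ^ c = k / 2 := by rw [hc, rpow_logb two_pos (by norm_num) (by positivity)]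
  have hf' : ∀ y, 1 / R < y → f y = logPeriodicProfile c p (y * R) := hf
  rw [hf' x hx, hf' _ hx2, show x ^ 2 * R * R = (x * R) ^ 2 by ring,
    logPeriodicProfile_sq hper hxR, h2c]
  field_simp
end

section
/- Let R and k be positive real constants and set c = log₂(k/2). Suppose f : ℝ → ℝ satisfies f(x²R) = (k/(2xR))·f(x) for every x > 1/R. Define p : ℝ → ℝ by p(s) = (2/k)^s · exp(2^s) · f(exp(2^s)/R). Then p is periodic with period 1, and f(x) = ((ln(xR))^c / (xR)) · p(log₂(ln(xR))) for every x > 1/R. -/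
/-! Substituting `x = exp(2^s)/R` turns `x ↦ x²R` into `s ↦ s + 1`, and the functional equation
becomes exactly the periodicity of `p`. Conversely every `x > 1/R` is of this form with
`s = log₂(ln(xR))`, and there `(ln(xR))^c = (2^s)^(log₂(k/2)) = (k/2)^s` cancels the factor `(2/k)^s`. -/

open Real

lemma exp_two_rpow_add_one (s : ℝ) : exp ((2 : ℝ) ^ (s + 1)) = exp ((2 : ℝ) ^ s) ^ 2 := by
  rw [rpow_add_one two_ne_zero, ← exp_nat_mul]
  ring_nf

lemma exp_two_rpow_logb_log {y : ℝ} (hy : 1 < y) : exp ((2 : ℝ) ^ logb 2 (log y)) = y := by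
  rw [rpow_logb two_pos (by norm_num) (log_pos hy), exp_log (by linarith)]

lemma rpow_rpow_logb {b y : ℝ} (hb : 0 < b) (hb1 : b ≠ 1) (hy : 0 < y) (s : ℝ) :
    (b ^ s) ^ logb b y = y ^ s := by
  rw [← rpow_mul hb.le, mul_comm, rpow_mul hb.le, rpow_logb hb hb1 hy]

lemma one_div_lt_exp_rpow_div {R : ℝ} (hR : 0 < R) (s : ℝ) : 1 / R < exp ((2 : ℝ) ^ s) / R := by
  gcongr
  exact one_lt_exp_iff.mpr (rpow_pos_of_pos two_pos s)

/-- If `f` satisfies `f(x²R) = (k/(2xR))·f(x)` for `x > 1/R`, then the function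
`p(s) = (2/k)^s · exp(2^s) · f(exp(2^s)/R)` is periodic with period 1 and
`f(x) = ((ln(xR))^c / (xR)) · p(log₂(ln(xR)))` for `x > 1/R`, where `c = log₂(k/2)`. -/
theorem stmt2 (R k : ℝ) (hR : 0 < R) (hk : 0 < k)
    (c : ℝ) (hc : c = Real.logb 2 (k / 2))
    (f : ℝ → ℝ)
    (hf : ∀ x, 1 / R < x → f (x ^ 2 * R) = (k / (2 * x * R)) * f x)
    (p : ℝ → ℝ)
    (hp : ∀ s : ℝ, p s = (2 / k) ^ s * Real.exp ((2 : ℝ) ^ s) * f (Real.exp ((2 : ℝ) ^ s) / R)) :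
    (∀ s, p (s + 1) = p s) ∧
      (∀ x, 1 / R < x →
        f x = ((Real.log (x * R)) ^ c / (x * R)) * p (Real.logb 2 (Real.log (x * R)))) := by
  constructor
  · intro s
    have hsq : (exp ((2 : ℝ) ^ s) / R) ^ 2 * R = exp ((2 : ℝ) ^ (s + 1)) / R := by
      rw [exp_two_rpow_add_one]
      field_simp
    have hstep := hf _ (one_div_lt_exp_rpow_div hR s)
    rw [hsq] at hstep
    rw [hp, hp, hstep, rpow_add_one (by positivity), exp_two_rpow_add_one]
    field_simp
  · intro x hx
    have hxR : 1 < x * R := (div_lt_iff₀ hR).mp hx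
    have hx0 : x ≠ 0 := by rintro rfl; norm_num at hxR
    set s := logb 2 (log (x * R))
    have hcancel : log (x * R) ^ c * (2 / k) ^ s = 1 := by
      rw [← rpow_logb two_pos (by norm_num) (log_pos hxR), hc,
        rpow_rpow_logb two_pos (by norm_num) (by positivity), ← mul_rpow (by positivity)
        (by positivity), div_mul_div_cancel₀ two_ne_zero, div_self hk.ne', one_rpow]
    rw [hp, exp_two_rpow_logb_log hxR, mul_div_cancel_right₀ x hR.ne']
    calc f x = (log (x * R) ^ c * (2 / k) ^ s) * f x := by rw [hcancel, one_mul]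
      _ = _ := by field_simp
end

section
/- Let R > 0 and let p : ℝ → ℝ be periodic with period 1. If the function f defined on (1/R, ∞) by f(x) = p(log₂(ln(xR))) / (xR) is monotone on (1/R, ∞) (either nondecreasing or nonincreasing), then p is constant. -/
/-!
Substituting `x = exp (2 ^ s) / R` turns `f` into `s ↦ p s / exp (2 ^ s)`, which is monotone in `s`.
Shifting by `-n` leaves `p` unchanged while `exp (2 ^ (s - n)) → 1`, so `p` is a pointwise limit of
monotone functions, hence monotone; a monotone periodic function is constant.
-/

open Filter Topology Real

theorem Function.Periodic.eq_of_monotone {α β : Type*} [AddCommGroup α] [LinearOrder α]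
    [IsOrderedAddMonoid α] [Archimedean α] [PartialOrder β] {p : α → β} {c : α}
    (hp : Function.Periodic p c) (hc : 0 < c) (hmono : Monotone p) (s t : α) : p s = p t := by
  have le_all : ∀ a b, p a ≤ p b := fun a b => by
    obtain ⟨n, hn⟩ := Archimedean.arch (a - b) hc
    rw [← hp.sub_nsmul_eq n]
    exact hmono (sub_le_comm.mp hn)
  exact le_antisymm (le_all s t) (le_all t s)

theorem Function.Periodic.eq_of_antitone {α β : Type*} [AddCommGroup α] [LinearOrder α]
    [IsOrderedAddMonoid α] [Archimedean α] [PartialOrder β] {p : α → β} {c : α}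
    (hp : Function.Periodic p c) (hc : 0 < c) (hanti : Antitone p) (s t : α) : p s = p t :=
  Function.Periodic.eq_of_monotone (β := βᵒᵈ) hp hc hanti.dual_right s t

section PointwiseLimit

variable {α β ι : Type*} [Preorder α] [TopologicalSpace β] [Preorder β] [OrderClosedTopology β]
  {l : Filter ι} [l.NeBot] {F : ι → α → β} {g : α → β}

theorem Monotone.of_tendsto (hF : ∀ i, Monotone (F i))
    (hlim : ∀ x, Tendsto (fun i => F i x) l (𝓝 (g x))) : Monotone g :=
  fun _ _ hab => le_of_tendsto_of_tendsto' (hlim _) (hlim _) fun i => hF i hab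

theorem Antitone.of_tendsto (hF : ∀ i, Antitone (F i))
    (hlim : ∀ x, Tendsto (fun i => F i x) l (𝓝 (g x))) : Antitone g :=
  fun _ _ hab => le_of_tendsto_of_tendsto' (hlim _) (hlim _) fun i => hF i hab

end PointwiseLimit

theorem tendsto_rpow_sub_nat_atTop {b : ℝ} (hb : 1 < b) (s : ℝ) :
    Tendsto (fun n : ℕ => b ^ (s - n)) atTop (𝓝 0) := by
  simp_rw [rpow_sub (zero_lt_one.trans hb), rpow_natCast]
  exact tendsto_const_nhds.div_atTop (tendsto_pow_atTop_atTop_of_one_lt hb)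

theorem Function.Periodic.tendsto_div_exp_two_rpow_sub_nat {p : ℝ → ℝ}
    (hp : Function.Periodic p 1) (s : ℝ) :
    Tendsto (fun n : ℕ => p (s - n) / exp (2 ^ (s - n))) atTop (𝓝 (p s)) := by
  have hshift : ∀ n : ℕ, p (s - n) = p s := fun n => by simpa using hp.sub_nat_mul_eq n
  have hexp : Tendsto (fun n : ℕ => exp (2 ^ (s - n))) atTop (𝓝 1) := by
    simpa [Function.comp_def] using
      (continuous_exp.tendsto 0).comp (tendsto_rpow_sub_nat_atTop one_lt_two s)
  simp only [hshift]
  simpa [div_eq_mul_inv] using (hexp.inv₀ one_ne_zero).const_mul (p s)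

/-- For `R > 0` and `p` periodic with period 1, if
`f(x) = p(log₂(ln(xR))) / (xR)` is monotone on `(1/R, ∞)` (nondecreasing or nonincreasing),
then `p` is constant. -/
theorem stmt5 (R : ℝ) (hR : 0 < R)
    (p : ℝ → ℝ) (hper : ∀ s, p (s + 1) = p s)
    (f : ℝ → ℝ)
    (hf : ∀ x, 1 / R < x → f x = p (Real.logb 2 (Real.log (x * R))) / (x * R))
    (hmono : MonotoneOn f (Set.Ioi (1 / R)) ∨ AntitoneOn f (Set.Ioi (1 / R))) :
    ∀ s t, p s = p t := by
  have hp : Function.Periodic p 1 := hper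
  set φ : ℝ → ℝ := fun s => exp (2 ^ s) / R
  have hφ_mem : ∀ s, φ s ∈ Set.Ioi (1 / R) := fun s => by
    have : 1 < exp (2 ^ s) := one_lt_exp_iff.mpr (by positivity)
    simp only [φ, Set.mem_Ioi]
    gcongr
  have hφ_mono : Monotone φ := fun a b hab => by
    simp only [φ]
    gcongr
    exact one_le_two
  have hfφ : ∀ s, f (φ s) = p s / exp (2 ^ s) := fun s => by
    rw [hf _ (hφ_mem s), div_mul_cancel₀ _ hR.ne', log_exp, logb_rpow two_pos (by norm_num)]
  have hlim : ∀ s, Tendsto (fun n : ℕ => f (φ (s - n))) atTop (𝓝 (p s)) := fun s => by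
    simpa only [hfφ] using hp.tendsto_div_exp_two_rpow_sub_nat s
  rcases hmono with h | h
  · exact hp.eq_of_monotone one_pos <| Monotone.of_tendsto
      (fun n a b hab => h (hφ_mem _) (hφ_mem _) (hφ_mono (by linarith))) hlim
  · exact hp.eq_of_antitone one_pos <| Antitone.of_tendsto
      (fun n a b hab => h (hφ_mem _) (hφ_mem _) (hφ_mono (by linarith))) hlim
end

section
/- Let R > 0 and take k = 2. If f : ℝ → ℝ satisfies f(x²R) = (2/(2xR))·f(x) = f(x)/(xR) for all x > 1/R and f is monotone on (1/R, ∞) (either nondecreasing or nonincreasing), then there exists λ ∈ ℝ such that f(x) = λ/(xR) for all x > 1/R. -/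
/-!
Put `u = x R` and `g u = u f (u / R)`. The functional equation says exactly that `g (u²) = g u` for
`u > 1`, while `f (u / R) = g u / u` is monotone in `u`. Comparing `g u / u` at the `2ⁿ`-th roots
of `a ≤ b`, which both tend to `1`, gives `g a ≤ g b`; so `g` is monotone, and a monotone function
invariant under squaring is constant on `(1, ∞)` because every `b` is bounded by some `a ^ 2 ^ n`.
-/

open Filter Topology Set

section SquaringInvariant

variable {g : ℝ → ℝ}

lemma apply_pow_two_pow_eq (hg : ∀ u, 1 < u → g (u ^ 2) = g u) (n : ℕ) {u : ℝ} (hu : 1 < u) :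
    g (u ^ 2 ^ n) = g u := by
  induction n with
  | zero => rw [pow_zero, pow_one]
  | succ n ih =>
    rw [pow_succ, pow_mul, hg _ (one_lt_pow₀ hu (by positivity)), ih]

lemma apply_rpow_inv_two_pow_eq (hg : ∀ u, 1 < u → g (u ^ 2) = g u) (n : ℕ) {u : ℝ}
    (hu : 1 < u) : g (u ^ ((2 ^ n : ℕ) : ℝ)⁻¹) = g u := by
  have hroot : 1 < u ^ ((2 ^ n : ℕ) : ℝ)⁻¹ := Real.one_lt_rpow hu (by positivity)
  rw [← apply_pow_two_pow_eq hg n hroot, ← Nat.cast_ofNat, ← Nat.cast_pow,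
    Real.rpow_inv_natCast_pow (by linarith) (by positivity)]

lemma tendsto_rpow_inv_two_pow {u : ℝ} (hu : 0 < u) :
    Tendsto (fun n : ℕ => u ^ ((2 ^ n : ℕ) : ℝ)⁻¹) atTop (𝓝 1) := by
  have hexp : Tendsto (fun n : ℕ => ((2 ^ n : ℕ) : ℝ)⁻¹) atTop (𝓝 0) :=
    tendsto_inv_atTop_zero.comp <| tendsto_natCast_atTop_atTop.comp <|
      tendsto_pow_atTop_atTop_of_one_lt one_lt_two
  have h := (Real.continuousAt_const_rpow hu.ne').tendsto.comp hexp
  rwa [Real.rpow_zero] at h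

lemma monotoneOn_of_monotoneOn_div_self (hg : ∀ u, 1 < u → g (u ^ 2) = g u)
    (hmono : MonotoneOn (fun u => g u / u) (Ioi 1)) : MonotoneOn g (Ioi 1) := by
  intro a (ha : 1 < a) b (hb : 1 < b) hab
  have hroot : ∀ n : ℕ, g a / a ^ ((2 ^ n : ℕ) : ℝ)⁻¹ ≤ g b / b ^ ((2 ^ n : ℕ) : ℝ)⁻¹ := by
    intro n
    have hexp : (0 : ℝ) < ((2 ^ n : ℕ) : ℝ)⁻¹ := by positivity
    have hle := hmono (Real.one_lt_rpow ha hexp) (Real.one_lt_rpow hb hexp)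
      (Real.rpow_le_rpow (by linarith) hab hexp.le)
    simpa only [apply_rpow_inv_two_pow_eq hg n ha, apply_rpow_inv_two_pow_eq hg n hb] using hle
  have hlim : ∀ {u}, 1 < u →
      Tendsto (fun n : ℕ => g u / u ^ ((2 ^ n : ℕ) : ℝ)⁻¹) atTop (𝓝 (g u)) := by
    intro u hu
    have h := (tendsto_const_nhds (x := g u)).div (tendsto_rpow_inv_two_pow (by linarith))
      one_ne_zero
    rwa [div_one] at h
  exact le_of_tendsto_of_tendsto' (hlim ha) (hlim hb) hroot

lemma eq_of_monotoneOn (hg : ∀ u, 1 < u → g (u ^ 2) = g u) (hmono : MonotoneOn g (Ioi 1))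
    {a b : ℝ} (ha : 1 < a) (hb : 1 < b) : g a = g b := by
  have key : ∀ {a b : ℝ}, 1 < a → 1 < b → g b ≤ g a := by
    intro a b ha hb
    obtain ⟨n, hn⟩ := pow_unbounded_of_one_lt b ha
    have hbn : b ≤ a ^ 2 ^ n :=
      hn.le.trans (pow_le_pow_right₀ ha.le Nat.lt_two_pow_self.le)
    calc g b ≤ g (a ^ 2 ^ n) := hmono hb (hb.trans_le hbn) hbn
      _ = g a := apply_pow_two_pow_eq hg n ha
  exact le_antisymm (key hb ha) (key ha hb)

lemma eq_of_monotoneOn_or_antitoneOn_div_self (hg : ∀ u, 1 < u → g (u ^ 2) = g u)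
    (hmono : MonotoneOn (fun u => g u / u) (Ioi 1) ∨ AntitoneOn (fun u => g u / u) (Ioi 1))
    {a b : ℝ} (ha : 1 < a) (hb : 1 < b) : g a = g b := by
  rcases hmono with hmono | hanti
  · exact eq_of_monotoneOn hg (monotoneOn_of_monotoneOn_div_self hg hmono) ha hb
  · have hg' : ∀ u, 1 < u → (-g) (u ^ 2) = (-g) u := fun u hu => by simp [hg u hu]
    have hmono' : MonotoneOn (fun u => (-g) u / u) (Ioi 1) := by
      simpa only [Pi.neg_apply, neg_div] using hanti.neg
    simpa using eq_of_monotoneOn hg' (monotoneOn_of_monotoneOn_div_self hg' hmono') ha hb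

end SquaringInvariant

/-- For `R > 0` and `k = 2`: if `f` satisfies `f(x²R) = f(x)/(xR)` for all
`x > 1/R` and `f` is monotone on `(1/R, ∞)`, then `f(x) = λ/(xR)` on `(1/R, ∞)` for some
`λ ∈ ℝ`. -/
theorem stmt6 (R : ℝ) (hR : 0 < R) (f : ℝ → ℝ)
    (hf : ∀ x, 1 / R < x → f (x ^ 2 * R) = f x / (x * R))
    (hmono : MonotoneOn f (Set.Ioi (1 / R)) ∨ AntitoneOn f (Set.Ioi (1 / R))) :
    ∃ lam : ℝ, ∀ x, 1 / R < x → f x = lam / (x * R) := by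
  set g : ℝ → ℝ := fun u => u * f (u / R)
  have one_div_lt : ∀ {u}, 1 < u → 1 / R < u / R := fun hu => div_lt_div_of_pos_right hu hR
  have hg : ∀ u, 1 < u → g (u ^ 2) = g u := by
    intro u hu
    have h := hf (u / R) (one_div_lt hu)
    rw [div_pow, sq R, ← div_div, div_mul_cancel₀ _ hR.ne', div_mul_cancel₀ _ hR.ne'] at h
    simp only [g, h]
    field_simp
  have hdiv : EqOn (fun u => f (u / R)) (fun u => g u / u) (Ioi 1) := fun u (hu : 1 < u) => by
    simp only [g]
    field_simp
  have hscale : MonotoneOn (fun u => u / R) (Ioi 1) := fun _ _ _ _ h =>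
    div_le_div_of_nonneg_right h hR.le
  have hmaps : MapsTo (fun u => u / R) (Ioi 1) (Ioi (1 / R)) := fun _ hu => one_div_lt hu
  have hmono' : MonotoneOn (fun u => g u / u) (Ioi 1) ∨ AntitoneOn (fun u => g u / u) (Ioi 1) :=
    hmono.imp (fun h => (h.comp hscale hmaps).congr hdiv)
      (fun h => (h.comp_MonotoneOn hscale hmaps).congr hdiv)
  refine ⟨g 2, fun x hx => ?_⟩
  have hxR : 1 < x * R := by rwa [div_lt_iff₀ hR] at hx
  rw [← eq_of_monotoneOn_or_antitoneOn_div_self hg hmono' hxR one_lt_two]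
  have hx0 : x ≠ 0 := (lt_trans (by positivity) hx).ne'
  simp only [g]
  field_simp
end

section
/- Let R > 0 and let c < 0 be a real number. Let m > 0 and let p : ℝ → ℝ be differentiable, periodic with period 1, and satisfy p(s) ≥ m and |p'(s)| ≤ (−c)·m·ln 2 for all s ∈ ℝ. Then the function f defined on (1/R, ∞) by f(x) = ((ln(xR))^c / (xR)) · p(log₂(ln(xR))) is monotone nonincreasing on (1/R, ∞): for all x, y with 1/R < x ≤ y one has f(x) ≥ f(y). -/
/-!
Substituting `t = ln(xR)`, and using `1/(xR) = e^{-t}`, the function is `x ↦ k(ln(xR))` with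
`k(t) = t^c e^{-t} p(log₂ t)`, so it suffices that `k` is antitone on `(0, ∞)`. There
`k'(t) = t^{c-1} e^{-t} (c p - t p + p'/ln 2)`, and the bound `p' ≤ -c m ln 2 ≤ -c p ln 2`
makes the bracket at most `-t p ≤ 0`.
-/

open Real Set

theorem hasDerivAt_rpow_mul_exp_neg_mul_comp_logb {p : ℝ → ℝ} {p' t : ℝ} (c : ℝ)
    (hp : HasDerivAt p p' (logb 2 t)) (ht : 0 < t) :
    HasDerivAt (fun t => t ^ c * exp (-t) * p (logb 2 t))
      (t ^ (c - 1) * exp (-t) * (c * p (logb 2 t) - t * p (logb 2 t) + p' / log 2)) t := by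
  have hlogb : HasDerivAt (logb 2) (t⁻¹ / log 2) t := by
    simpa only [log_div_log] using (hasDerivAt_log ht.ne').div_const (log 2)
  have hrpow := hasDerivAt_rpow_const (p := c) (Or.inl ht.ne')
  refine ((hrpow.mul (hasDerivAt_neg t).exp).mul (hp.comp t hlogb)).congr_deriv ?_
  rw [rpow_sub_one ht.ne', Function.comp_apply, Pi.mul_apply]
  field_simp
  ring

theorem antitoneOn_rpow_mul_exp_neg_mul_comp_logb {c m : ℝ} {p : ℝ → ℝ} (hc : c ≤ 0)
    (hm : 0 ≤ m) (hp : Differentiable ℝ p) (hpm : ∀ s, m ≤ p s)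
    (hp' : ∀ s, deriv p s ≤ -c * m * log 2) :
    AntitoneOn (fun t => t ^ c * exp (-t) * p (logb 2 t)) (Ioi 0) := by
  have hderiv (t : ℝ) (ht : 0 < t) := hasDerivAt_rpow_mul_exp_neg_mul_comp_logb c
    (hp (logb 2 t)).hasDerivAt ht
  refine antitoneOn_of_hasDerivWithinAt_nonpos (convex_Ioi 0)
    (fun t ht => (hderiv t ht).continuousAt.continuousWithinAt)
    (fun t ht => (hderiv t (by rwa [interior_Ioi] at ht)).hasDerivWithinAt) fun t ht => ?_
  rw [interior_Ioi, mem_Ioi] at ht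
  set s := logb 2 t
  have hlog2 : 0 < log 2 := log_pos one_lt_two
  have hp's : deriv p s / log 2 ≤ -c * m := by rw [div_le_iff₀ hlog2]; exact hp' s
  have hbracket : c * p s - t * p s + deriv p s / log 2 ≤ 0 := by
    nlinarith [hpm s, mul_nonneg (le_of_lt ht) (hm.trans (hpm s))]
  exact mul_nonpos_of_nonneg_of_nonpos (by positivity) hbracket

theorem stmt8_general (R : ℝ) (hR : 0 < R) (c : ℝ) (hc : c < 0) (m : ℝ) (hm : 0 < m)
    (p : ℝ → ℝ) (hpdiff : Differentiable ℝ p)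
    (hpm : ∀ s, m ≤ p s) (hp' : ∀ s, |deriv p s| ≤ (-c) * m * Real.log 2)
    (f : ℝ → ℝ)
    (hf : ∀ x, 1 / R < x →
      f x = ((Real.log (x * R)) ^ c / (x * R)) * p (Real.logb 2 (Real.log (x * R)))) :
    ∀ x y, 1 / R < x → x ≤ y → f x ≥ f y := by
  have hanti := antitoneOn_rpow_mul_exp_neg_mul_comp_logb hc.le hm.le hpdiff hpm
    fun s => (abs_le.mp (hp' s)).2
  have hsubst : ∀ x, 1 / R < x → 1 < x * R ∧
      f x = log (x * R) ^ c * exp (-log (x * R)) * p (logb 2 (log (x * R))) := by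
    intro x hx
    have hxR : 1 < x * R := (div_lt_iff₀ hR).mp hx
    rw [hf x hx, exp_neg, exp_log (by linarith), div_eq_mul_inv]
    exact ⟨hxR, rfl⟩
  intro x y hx hxy
  obtain ⟨hxR, hfx⟩ := hsubst x hx
  obtain ⟨hyR, hfy⟩ := hsubst y (hx.trans_le hxy)
  rw [hfx, hfy]
  exact hanti (log_pos hxR) (log_pos hyR) (log_le_log (by linarith) (by gcongr))

/-- For `R > 0`, `c < 0`, `m > 0`, and `p` differentiable, 1-periodic, with
`p ≥ m` and `|p'| ≤ (−c)·m·ln 2` everywhere, the function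
`f(x) = ((ln(xR))^c / (xR)) · p(log₂(ln(xR)))` is monotone nonincreasing on `(1/R, ∞)`. -/
theorem stmt8 (R : ℝ) (hR : 0 < R) (c : ℝ) (hc : c < 0) (m : ℝ) (hm : 0 < m)
    (p : ℝ → ℝ) (hpdiff : Differentiable ℝ p) (hper : ∀ s, p (s + 1) = p s)
    (hpm : ∀ s, m ≤ p s) (hp' : ∀ s, |deriv p s| ≤ (-c) * m * Real.log 2)
    (f : ℝ → ℝ)
    (hf : ∀ x, 1 / R < x →
      f x = ((Real.log (x * R)) ^ c / (x * R)) * p (Real.logb 2 (Real.log (x * R)))) :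
    ∀ x y, 1 / R < x → x ≤ y → f x ≥ f y :=
  stmt8_general R hR c hc m hm p hpdiff hpm hp' f hf
end

section
/- Let R and k be positive real constants and set c = log₂(k/2). If p : ℝ → ℝ is periodic with period 1, then the function f defined on (0, 1/R) by f(x) = ((−ln(xR))^c / (xR)) · p(log₂(−ln(xR))) satisfies the functional equation f(x²R) = (k/(2xR))·f(x) for every x with 0 < x < 1/R. -/
/-!
Put `u = xR` and `t = -ln u`. The map `x ↦ x²R` sends `u` to `u²`, hence `t` to `2t`. Doubling `t`
multiplies `t^c` by `2^c = k/2` and shifts `log₂ t` by one, which the period of `p` absorbs;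
the remaining factor `1/u` becomes `1/u² = (1/u)·(1/u)`.
-/

open Real

lemma rpow_mul_periodic_logb_mul_base {b c t : ℝ} {p : ℝ → ℝ} (hp : Function.Periodic p 1)
    (hb : 0 < b) (hb1 : b ≠ 1) (ht : 0 < t) :
    (b * t) ^ c * p (logb b (b * t)) = b ^ c * (t ^ c * p (logb b t)) := by
  have hlogb : logb b (b * t) = logb b t + 1 := by
    rw [logb_mul hb.ne' ht.ne', logb_self_eq_one_iff.mpr ⟨hb.ne', hb1, by linarith⟩, add_comm]
  rw [mul_rpow hb.le ht.le, hlogb, hp, mul_assoc]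

lemma sq_mul_mem_Ioo {R x : ℝ} (hR : 0 < R) (hx : x ∈ Set.Ioo 0 (1 / R)) :
    x ^ 2 * R ∈ Set.Ioo 0 (1 / R) := by
  obtain ⟨hx0, hx1⟩ := hx
  have hxR : x * R < 1 := (lt_div_iff₀ hR).mp hx1
  refine ⟨by positivity, (lt_div_iff₀ hR).mpr ?_⟩
  nlinarith [mul_pos hx0 hR]

/-- For `R, k > 0`, `c = log₂(k/2)`, and `p` 1-periodic, the function
`f(x) = ((−ln(xR))^c / (xR)) · p(log₂(−ln(xR)))` on `(0, 1/R)` satisfies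
`f(x²R) = (k/(2xR))·f(x)` for all `0 < x < 1/R`. -/
theorem stmt9 (R k : ℝ) (hR : 0 < R) (hk : 0 < k)
    (c : ℝ) (hc : c = Real.logb 2 (k / 2))
    (p : ℝ → ℝ) (hper : ∀ s, p (s + 1) = p s)
    (f : ℝ → ℝ)
    (hf : ∀ x, 0 < x → x < 1 / R →
      f x = ((-Real.log (x * R)) ^ c / (x * R)) * p (Real.logb 2 (-Real.log (x * R)))) :
    ∀ x, 0 < x → x < 1 / R → f (x ^ 2 * R) = (k / (2 * x * R)) * f x := by
  intro x hx hx1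
  obtain ⟨hx2, hx21⟩ := sq_mul_mem_Ioo hR ⟨hx, hx1⟩
  have hu : 0 < x * R := mul_pos hx hR
  have hlog : 0 < -log (x * R) :=
    neg_pos.mpr (log_neg hu ((lt_div_iff₀ hR).mp hx1))
  have hsqR : x ^ 2 * R * R = (x * R) ^ 2 := by ring
  have hsq : -log (x ^ 2 * R * R) = 2 * -log (x * R) := by
    rw [hsqR, log_pow]
    push_cast
    ring
  have h2c : (2 : ℝ) ^ c = k / 2 := by
    rw [hc, rpow_logb two_pos (by norm_num) (by positivity)]
  have hscale := rpow_mul_periodic_logb_mul_base (c := c) hper two_pos (by norm_num) hlog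
  rw [hf _ hx2 hx21, hf x hx hx1, hsq, div_mul_eq_mul_div, hscale, h2c, hsqR]
  field_simp
end

section
/- Let R and k be positive real constants and set c = log₂(k/2). Suppose f : ℝ → ℝ satisfies f(x²R) = (k/(2xR))·f(x) for every x with 0 < x < 1/R. Then there exists a function p : ℝ → ℝ periodic with period 1 such that f(x) = ((−ln(xR))^c / (xR)) · p(log₂(−ln(xR))) for every x with 0 < x < 1/R. -/
/-!
Substituting `x R = exp (-t)` turns the equation into `H (2 t) = (k / 2) H t` for
`H t = exp (-t) · f (exp (-t) / R)`, i.e. `H` is homogeneous of degree `c = log₂ (k / 2)`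
under doubling. Hence `H t / t ^ c` is invariant under `t ↦ 2 t`, so
`p s = H (2 ^ s) / (2 ^ s) ^ c` is 1-periodic, and `t = 2 ^ s = -ln (x R)` recovers `f`.
-/

open Real

theorem periodic_div_rpow_comp_rpow {b c : ℝ} (hb : 0 < b) {H : ℝ → ℝ}
    (hH : ∀ t, 0 < t → H (b * t) = b ^ c * H t) :
    Function.Periodic (fun s : ℝ => H (b ^ s) / (b ^ s) ^ c) 1 := by
  intro s
  have hbs : 0 < b ^ s := rpow_pos_of_pos hb s
  have hshift : b ^ (s + 1) = b * b ^ s := by rw [rpow_add_one hb.ne', mul_comm]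
  simp only [hshift, hH _ hbs, mul_rpow hb.le hbs.le]
  exact mul_div_mul_left _ _ (rpow_pos_of_pos hb c).ne'

theorem exp_neg_mul_apply_two_mul {R k : ℝ} (hR : 0 < R) {f : ℝ → ℝ}
    (hf : ∀ x, 0 < x → x < 1 / R → f (x ^ 2 * R) = (k / (2 * x * R)) * f x)
    {t : ℝ} (ht : 0 < t) :
    exp (-(2 * t)) * f (exp (-(2 * t)) / R) = k / 2 * (exp (-t) * f (exp (-t) / R)) := by
  have hx : 0 < exp (-t) / R := by positivity
  have hx1 : exp (-t) / R < 1 / R :=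
    div_lt_div_of_pos_right (exp_lt_one_iff.mpr (by linarith)) hR
  have hsq : exp (-(2 * t)) = exp (-t) ^ 2 := by rw [← exp_nat_mul]; ring_nf
  have hxsq : exp (-(2 * t)) / R = (exp (-t) / R) ^ 2 * R := by
    rw [hsq]; field_simp
  rw [hxsq, hf _ hx hx1, hsq]
  field_simp

/-- For `R, k > 0`, `c = log₂(k/2)`: if `f` satisfies
`f(x²R) = (k/(2xR))·f(x)` for all `0 < x < 1/R`, then there is a 1-periodic `p : ℝ → ℝ`
with `f(x) = ((−ln(xR))^c / (xR)) · p(log₂(−ln(xR)))` for all `0 < x < 1/R`. -/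
theorem stmt10 (R k : ℝ) (hR : 0 < R) (hk : 0 < k)
    (c : ℝ) (hc : c = Real.logb 2 (k / 2))
    (f : ℝ → ℝ)
    (hf : ∀ x, 0 < x → x < 1 / R → f (x ^ 2 * R) = (k / (2 * x * R)) * f x) :
    ∃ p : ℝ → ℝ, (∀ s, p (s + 1) = p s) ∧
      ∀ x, 0 < x → x < 1 / R →
        f x = ((-Real.log (x * R)) ^ c / (x * R)) * p (Real.logb 2 (-Real.log (x * R))) := by
  set H : ℝ → ℝ := fun t => exp (-t) * f (exp (-t) / R)
  have h2c : (2 : ℝ) ^ c = k / 2 := by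
    rw [hc]; exact rpow_logb two_pos (by norm_num) (by positivity)
  have hH : ∀ t, 0 < t → H (2 * t) = 2 ^ c * H t := fun t ht => by
    rw [h2c]; exact exp_neg_mul_apply_two_mul hR hf ht
  refine ⟨fun s : ℝ => H (2 ^ s) / (2 ^ s) ^ c, periodic_div_rpow_comp_rpow two_pos hH,
    fun x hx hx1 => ?_⟩
  have hxR : 0 < x * R := by positivity
  have ht : 0 < -log (x * R) := neg_pos.mpr (log_neg hxR ((lt_div_iff₀ hR).mp hx1))
  have hexp : exp (-(-log (x * R))) = x * R := by rw [neg_neg, exp_log hxR]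
  have htc : 0 < (-log (x * R)) ^ c := rpow_pos_of_pos ht c
  simp only [H, rpow_logb two_pos (by norm_num) ht, hexp, mul_div_cancel_right₀ x hR.ne']
  field_simp
end

section
/- Let R > 0 and let 0 < k < 2. Suppose f : ℝ → ℝ satisfies f(x²R) = (k/(2xR))·f(x) for every x > 1/R, and suppose f(x) tends to a finite limit as x → (1/R)⁺. Then f(x) = 0 for every x > 1/R. -/
/-!
Fix `y > 1/R` and follow the functional equation backwards: the points
`yₙ = (R y)^(1/2ⁿ) / R` satisfy `yₙ₊₁² R = yₙ` and decrease to `1/R`. Since `yₙ₊₁ R > 1`,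
the equation gives `|f yₙ| ≤ (k/2) |f yₙ₊₁|`, hence `|f y| ≤ (k/2)ⁿ |f yₙ|`. The values `f yₙ`
converge, so they are bounded, and `(k/2)ⁿ → 0` forces `f y = 0`.
-/

open Filter Topology

lemma eq_zero_of_abs_le_mul_abs_succ {u : ℕ → ℝ} {c L : ℝ} (hc0 : 0 ≤ c) (hc1 : c < 1)
    (hu : ∀ n, |u n| ≤ c * |u (n + 1)|) (hL : Tendsto u atTop (𝓝 L)) : u 0 = 0 := by
  have hbound : ∀ n, |u 0| ≤ c ^ n * |u n| := by
    intro n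
    induction n with
    | zero => simp
    | succ n ih =>
      calc |u 0| ≤ c ^ n * |u n| := ih
        _ ≤ c ^ n * (c * |u (n + 1)|) := by gcongr; exact hu n
        _ = c ^ (n + 1) * |u (n + 1)| := by ring
  have hzero : Tendsto (fun n => c ^ n * |u n|) atTop (𝓝 0) := by
    simpa using (tendsto_pow_atTop_nhds_zero_of_lt_one hc0 hc1).mul hL.abs
  exact abs_eq_zero.1 (le_antisymm (ge_of_tendsto' hzero hbound) (abs_nonneg _))

/-- The `n`-th preimage of `y` under `x ↦ x² R`. -/
noncomputable def backwardOrbit (R y : ℝ) (n : ℕ) : ℝ :=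
  (R * y) ^ ((1 / 2 : ℝ) ^ n) / R

section backwardOrbit

variable {R y : ℝ}

lemma backwardOrbit_zero (hR : R ≠ 0) : backwardOrbit R y 0 = y := by
  simp [backwardOrbit, hR]

lemma backwardOrbit_succ_sq_mul (hR : 0 < R) (hRy : 0 ≤ R * y) (n : ℕ) :
    backwardOrbit R y (n + 1) ^ 2 * R = backwardOrbit R y n := by
  have hpow : ((R * y) ^ ((1 / 2 : ℝ) ^ (n + 1))) ^ 2 = (R * y) ^ ((1 / 2 : ℝ) ^ n) := by
    rw [← Real.rpow_natCast, ← Real.rpow_mul hRy, pow_succ]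
    congr 1
    ring
  rw [backwardOrbit, backwardOrbit, div_pow, hpow]
  field_simp

lemma one_div_lt_backwardOrbit (hR : 0 < R) (hy : 1 / R < y) (n : ℕ) :
    1 / R < backwardOrbit R y n := by
  have hRy : 1 < R * y := by rwa [div_lt_iff₀' hR] at hy
  unfold backwardOrbit
  gcongr
  exact Real.one_lt_rpow hRy (by positivity)

lemma tendsto_backwardOrbit (hR : 0 < R) (hy : 1 / R < y) :
    Tendsto (backwardOrbit R y) atTop (𝓝[>] (1 / R)) := by
  have hRy : 0 < R * y := by
    have : 0 < y := (one_div_pos.2 hR).trans hy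
    positivity
  have hexp : Tendsto (fun n : ℕ => (1 / 2 : ℝ) ^ n) atTop (𝓝 0) :=
    tendsto_pow_atTop_nhds_zero_of_lt_one (by norm_num) (by norm_num)
  have hlim : Tendsto (backwardOrbit R y) atTop (𝓝 (1 / R)) := by
    have := ((Real.continuousAt_const_rpow hRy.ne').tendsto.comp hexp).div_const R
    rwa [Function.comp_def, Real.rpow_zero] at this
  exact tendsto_nhdsWithin_of_tendsto_nhds_of_eventually_within _ hlim
    (Eventually.of_forall (one_div_lt_backwardOrbit hR hy))

end backwardOrbit

/-- For `R > 0` and `0 < k < 2`: if `f` satisfies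
`f(x²R) = (k/(2xR))·f(x)` for all `x > 1/R` and `f` has a finite limit as `x → (1/R)⁺`,
then `f = 0` on `(1/R, ∞)`. -/
theorem stmt11 (R k : ℝ) (hR : 0 < R) (hk0 : 0 < k) (hk2 : k < 2)
    (f : ℝ → ℝ)
    (hf : ∀ x, 1 / R < x → f (x ^ 2 * R) = (k / (2 * x * R)) * f x)
    (hlim : ∃ L : ℝ, Filter.Tendsto f (nhdsWithin (1 / R) (Set.Ioi (1 / R))) (nhds L)) :
    ∀ x, 1 / R < x → f x = 0 := by
  intro y hy
  obtain ⟨L, hL⟩ := hlim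
  have hRy : 1 < R * y := by rwa [div_lt_iff₀' hR] at hy
  have hstep : ∀ n, |f (backwardOrbit R y n)| ≤ k / 2 * |f (backwardOrbit R y (n + 1))| := by
    intro n
    have hx := one_div_lt_backwardOrbit hR hy (n + 1)
    have hxR : 1 < backwardOrbit R y (n + 1) * R := by rwa [div_lt_iff₀' hR, mul_comm] at hx
    rw [← backwardOrbit_succ_sq_mul hR (by linarith) n, hf _ hx, abs_mul,
      abs_of_pos (div_pos hk0 (by linarith))]
    gcongr
    linarith
  rw [← backwardOrbit_zero (y := y) hR.ne']
  exact eq_zero_of_abs_le_mul_abs_succ (by linarith) (by linarith) hstep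
    (hL.comp (tendsto_backwardOrbit hR hy))
end

section
/- Let R > 0 and take k = 2. Suppose f : ℝ → ℝ satisfies f(x²R) = f(x)/(xR) for every x > 1/R and f is continuous at 1/R (from the right, within [1/R, ∞)). Then f(x) = f(1/R)/(xR) for every x ≥ 1/R. -/
/-! With `g y := y * f (y / R)` the functional equation becomes `g (y ^ 2) = g y` for `y > 1`.
Hence `g y = g (y ^ (1 / 2 ^ n))` for every `n`, and since `y ^ (1 / 2 ^ n) → 1⁺`, continuity
at `1` forces `g y = g 1 = f (1 / R)`. -/

open Filter Topology Set

theorem Real.tendsto_rpow_half_pow_nhdsWithin_Ici_one {y : ℝ} (hy : 1 ≤ y) :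
    Tendsto (fun n : ℕ => y ^ ((1 / 2 : ℝ) ^ n)) atTop (𝓝[≥] 1) := by
  have hpow : Tendsto (fun n : ℕ => (1 / 2 : ℝ) ^ n) atTop (𝓝 0) :=
    tendsto_pow_atTop_nhds_zero_of_lt_one (by norm_num) (by norm_num)
  have hlim : Tendsto (fun n : ℕ => y ^ ((1 / 2 : ℝ) ^ n)) atTop (𝓝 1) := by
    have hy0 : y ≠ 0 := by positivity
    simpa only [Real.rpow_zero, Function.comp_def] using
      (Real.continuousAt_const_rpow hy0).tendsto.comp hpow
  exact tendsto_nhdsWithin_iff.mpr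
    ⟨hlim, Eventually.of_forall fun n => Real.one_le_rpow hy (by positivity)⟩

theorem apply_rpow_half_pow_eq_of_apply_sq_eq {α : Type*} {g : ℝ → α}
    (hg : ∀ y, 1 < y → g (y ^ 2) = g y) {y : ℝ} (hy : 1 < y) (n : ℕ) :
    g (y ^ ((1 / 2 : ℝ) ^ n)) = g y := by
  induction n with
  | zero => simp
  | succ n ih =>
    have hroot : 1 < y ^ ((1 / 2 : ℝ) ^ (n + 1)) :=
      Real.one_lt_rpow hy (by positivity)
    have hsq : (y ^ ((1 / 2 : ℝ) ^ (n + 1))) ^ 2 = y ^ ((1 / 2 : ℝ) ^ n) := by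
      rw [← Real.rpow_natCast, ← Real.rpow_mul (by linarith), pow_succ, mul_assoc]
      norm_num
    rw [← ih, ← hsq, hg _ hroot]

theorem eq_apply_one_of_apply_sq_eq {α : Type*} [TopologicalSpace α] [T2Space α] {g : ℝ → α}
    (hg : ∀ y, 1 < y → g (y ^ 2) = g y) (hcont : ContinuousWithinAt g (Ici 1) 1) {y : ℝ}
    (hy : 1 ≤ y) : g y = g 1 := by
  rcases hy.eq_or_lt with rfl | hy
  · rfl
  refine tendsto_nhds_unique ?_
    (hcont.tendsto.comp (Real.tendsto_rpow_half_pow_nhdsWithin_Ici_one hy.le))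
  simp only [Function.comp_def, apply_rpow_half_pow_eq_of_apply_sq_eq hg hy]
  exact tendsto_const_nhds

/-- For `R > 0` and `k = 2`: if `f` satisfies `f(x²R) = f(x)/(xR)` for all
`x > 1/R` and `f` is continuous at `1/R` from the right (within `[1/R, ∞)`), then
`f(x) = f(1/R)/(xR)` for all `x ≥ 1/R`. -/
theorem stmt13 (R : ℝ) (hR : 0 < R) (f : ℝ → ℝ)
    (hf : ∀ x, 1 / R < x → f (x ^ 2 * R) = f x / (x * R))
    (hcont : ContinuousWithinAt f (Set.Ici (1 / R)) (1 / R)) :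
    ∀ x, 1 / R ≤ x → f x = f (1 / R) / (x * R) := by
  intro x hx
  set g : ℝ → ℝ := fun y => y * f (y / R)
  have hg : ∀ y, 1 < y → g (y ^ 2) = g y := by
    intro y hy
    have hfy := hf (y / R) (div_lt_div_of_pos_right hy hR)
    have hy0 : y ≠ 0 := by positivity
    simp only [g]
    rw [show y ^ 2 / R = (y / R) ^ 2 * R by field_simp, hfy]
    field_simp
  have hgcont : ContinuousWithinAt g (Ici 1) 1 := by
    have hscale : ContinuousWithinAt (fun y : ℝ => y / R) (Ici 1) 1 :=
      (continuous_id.div_const R).continuousWithinAt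
    have hmaps : MapsTo (fun y : ℝ => y / R) (Ici 1) (Ici (1 / R)) :=
      fun y hy => div_le_div_of_nonneg_right hy hR.le
    exact continuousWithinAt_id.mul
      (ContinuousWithinAt.comp (f := fun y => y / R) hcont hscale hmaps)
  have hxR : 1 ≤ x * R := by rwa [div_le_iff₀ hR] at hx
  have key := eq_apply_one_of_apply_sq_eq hg hgcont hxR
  simp only [g, one_mul, mul_div_cancel_right₀ x hR.ne'] at key
  have hx0 : x ≠ 0 := (lt_of_lt_of_le (by positivity) hx).ne'
  rw [← key]
  field_simp
end

section
/- Let R > 0 and let c be a real number with 0 < c ≤ 1. Let p : ℝ → ℝ be continuously differentiable and periodic with period 1, and define f on (1/R, ∞) by f(x) = ((ln(xR))^c / (xR)) · p(log₂(ln(xR))). If the derivative f'(x) tends to a finite limit as x → (1/R)⁺, then p is constant. -/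
/-!
Substituting `x = exp (2 ^ s) / R` gives
`f' x = (2 ^ s) ^ (c - 1) · R / exp (2 ^ s) ^ 2 · (q s - 2 ^ s · p s)` with
`q = c · p + p' / log 2`. As `s → -∞` the point `x` tends to `1 / R` from the right and,
because `c ≤ 1`, the factor `(2 ^ s) ^ (1 - c)` converges (to `0 ^ (1 - c)`, which is `1`
for `c = 1` and `0` otherwise), so `q` has a limit at `-∞`. Being 1-periodic, `q` is constant;
then `c · p - q` is a periodic solution of `g' = -c log 2 · g`, hence zero.
-/

open Real Filter Set Topology

namespace Function

theorem Periodic.eq_of_tendsto_atBot {α : Type*} [TopologicalSpace α] [T2Space α] {q : ℝ → α}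
    {T : ℝ} (hq : Periodic q T) (hT : 0 < T) {l : α} (h : Tendsto q atBot (𝓝 l)) (s : ℝ) :
    q s = l := by
  have hshift : Tendsto (fun n : ℕ => s - n * T) atTop atBot :=
    tendsto_atBot_add_const_left _ s <| tendsto_neg_atTop_atBot.comp <|
      tendsto_natCast_atTop_atTop.atTop_mul_const hT
  exact tendsto_nhds_unique (tendsto_const_nhds.congr fun n => (hq.sub_nat_mul_eq n).symm)
    (h.comp hshift)

theorem Periodic.deriv {𝕜 F : Type*} [NontriviallyNormedField 𝕜] [NormedAddCommGroup F]
    [NormedSpace 𝕜 F] {f : 𝕜 → F} {T : 𝕜} (hf : Periodic f T) : Periodic (deriv f) T :=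
  fun s => by rw [← deriv_comp_add_const, funext hf]

theorem Periodic.eq_zero_of_hasDerivAt_mul_self {g : ℝ → ℝ} {T a : ℝ} (hg : Periodic g T)
    (hT : T ≠ 0) (ha : a ≠ 0) (hderiv : ∀ s, HasDerivAt g (a * g s) s) (s : ℝ) : g s = 0 := by
  set H : ℝ → ℝ := fun s => exp (-(a * s)) * g s
  have hH : ∀ s, HasDerivAt H 0 s := fun s => by
    have hexp : HasDerivAt (fun s => exp (-(a * s))) (exp (-(a * s)) * -a) s := by
      simpa using ((hasDerivAt_id s).const_mul a).neg.exp
    exact (hexp.mul (hderiv s)).congr_deriv (by ring)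
  have hHconst := is_const_of_deriv_eq_zero (fun s => (hH s).differentiableAt) fun s => (hH s).deriv
  have hshift : H (s + T) = H s := hHconst _ _
  simp only [H, hg s, mul_add, neg_add, exp_add] at hshift
  have hexp : exp (-(a * T)) ≠ 1 := by
    rw [Ne, exp_eq_one_iff]; exact neg_ne_zero.mpr (mul_ne_zero ha hT)
  have : exp (-(a * s)) * g s * (exp (-(a * T)) - 1) = 0 := by linear_combination hshift
  simpa [exp_ne_zero, sub_eq_zero, hexp] using this

end Function

theorem hasDerivAt_rpow_log_div_mul_comp_logb {R c y : ℝ} {p : ℝ → ℝ} (hR : 0 < R) (hy : 0 < y)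
    (hp : DifferentiableAt ℝ p (logb 2 y)) :
    HasDerivAt (fun x => log (x * R) ^ c / (x * R) * p (logb 2 (log (x * R))))
      (y ^ (c - 1) * R / exp y ^ 2 *
        (c * p (logb 2 y) + deriv p (logb 2 y) / log 2 - y * p (logb 2 y))) (exp y / R) := by
  have hxR : exp y / R * R = exp y := div_mul_cancel₀ _ hR.ne'
  have hlog : log (exp y / R * R) = y := by rw [hxR, log_exp]
  have hmul : HasDerivAt (fun x => x * R) R (exp y / R) := by
    simpa using (hasDerivAt_id _).mul_const R
  have hℓ : HasDerivAt (fun x => log (x * R)) (R / exp y) (exp y / R) := by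
    have := hmul.log (by rw [hxR]; positivity)
    rwa [hxR] at this
  have hpow : HasDerivAt (fun x => log (x * R) ^ c) (R / exp y * c * y ^ (c - 1)) (exp y / R) := by
    have := hℓ.rpow_const (p := c) (Or.inl (by rw [hlog]; exact hy.ne'))
    rwa [hlog] at this
  have hlogb : HasDerivAt (fun x => logb 2 (log (x * R))) (R / exp y / y / log 2) (exp y / R) := by
    have := (hℓ.log (by rw [hlog]; exact hy.ne')).div_const (log 2)
    rw [hlog] at this
    simpa only [logb] using this
  have hcomp : HasDerivAt (fun x => p (logb 2 (log (x * R))))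
      (deriv p (logb 2 y) * (R / exp y / y / log 2)) (exp y / R) := by
    have hp' : HasDerivAt p (deriv p (logb 2 y)) (logb 2 (log (exp y / R * R))) := by
      rw [hlog]; exact hp.hasDerivAt
    exact hp'.comp (exp y / R) hlogb
  refine ((hpow.div hmul (by rw [hxR]; positivity)).mul hcomp).congr_deriv ?_
  simp only [Pi.div_apply, hxR, log_exp]
  have hyc : y ^ c = y ^ (c - 1) * y := by
    rw [← rpow_add_one hy.ne']; ring_nf
  rw [hyc]
  field_simp
  ring

section

variable {R c L : ℝ} {p f : ℝ → ℝ}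

theorem mul_add_deriv_div_log_two_eq (hR : 0 < R) (hp : Differentiable ℝ p)
    (hf : ∀ x, 1 / R < x → f x = log (x * R) ^ c / (x * R) * p (logb 2 (log (x * R))))
    (s : ℝ) :
    c * p s + deriv p s / log 2 =
      (2 ^ s) ^ (1 - c) * exp (2 ^ s) ^ 2 / R * deriv f (exp (2 ^ s) / R) + 2 ^ s * p s := by
  have hy : (0 : ℝ) < 2 ^ s := by positivity
  have hx : 1 / R < exp (2 ^ s) / R := div_lt_div_of_pos_right (one_lt_exp_iff.mpr hy) hR
  have hfx : f =ᶠ[𝓝 (exp (2 ^ s) / R)]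
      fun x => log (x * R) ^ c / (x * R) * p (logb 2 (log (x * R))) :=
    eventually_of_mem (isOpen_Ioi.mem_nhds hx) hf
  have hderiv := hasDerivAt_rpow_log_div_mul_comp_logb (c := c) hR hy (hp _)
  rw [logb_rpow two_pos one_lt_two.ne'] at hderiv
  rw [hfx.deriv_eq, hderiv.deriv]
  have hpow : ((2 : ℝ) ^ s) ^ (1 - c) = ((2 ^ s) ^ (c - 1))⁻¹ := by
    rw [← rpow_neg hy.le, neg_sub]
  have : ((2 : ℝ) ^ s) ^ (c - 1) ≠ 0 := (rpow_pos_of_pos hy _).ne'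
  rw [hpow]
  field_simp
  ring

theorem tendsto_mul_add_deriv_div_log_two_atBot (hR : 0 < R) (hc1 : c ≤ 1)
    (hp : ContDiff ℝ 1 p) (hper : Function.Periodic p 1)
    (hf : ∀ x, 1 / R < x → f x = log (x * R) ^ c / (x * R) * p (logb 2 (log (x * R))))
    (hlim : Tendsto (deriv f) (𝓝[>] (1 / R)) (𝓝 L)) :
    Tendsto (fun s => c * p s + deriv p s / log 2) atBot (𝓝 (0 ^ (1 - c) / R * L)) := by
  have h2s : Tendsto (fun s : ℝ => (2 : ℝ) ^ s) atBot (𝓝 0) :=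
    tendsto_rpow_atBot_of_base_gt_one 2 one_lt_two
  have hexp : Tendsto (fun s : ℝ => exp (2 ^ s)) atBot (𝓝 1) := by
    simpa [Function.comp_def] using (continuous_exp.tendsto 0).comp h2s
  have hx : Tendsto (fun s : ℝ => exp (2 ^ s) / R) atBot (𝓝[>] (1 / R)) :=
    tendsto_nhdsWithin_iff.mpr ⟨hexp.div_const R, .of_forall fun s =>
      div_lt_div_of_pos_right (one_lt_exp_iff.mpr (by positivity)) hR⟩
  have hpow : Tendsto (fun s : ℝ => ((2 : ℝ) ^ s) ^ (1 - c)) atBot (𝓝 (0 ^ (1 - c))) :=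
    ((continuous_rpow_const (by linarith)).tendsto 0).comp h2s
  have hbdd : IsBoundedUnder (· ≤ ·) atBot (norm ∘ p) := by
    obtain ⟨C, hC⟩ := isBounded_iff_forall_norm_le.mp
      (hper.isBounded_of_continuous one_ne_zero hp.continuous)
    exact isBoundedUnder_of ⟨C, fun s => hC _ (mem_range_self s)⟩
  have hmain := ((hpow.mul ((hexp.pow 2).div_const R)).mul (hlim.comp hx)).add
    (h2s.zero_mul_isBoundedUnder_le hbdd)
  simp only [one_pow, add_zero, Function.comp_apply, ← mul_div_assoc, mul_one] at hmain
  exact hmain.congr fun s =>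
    (mul_add_deriv_div_log_two_eq hR (hp.differentiable one_ne_zero) hf s).symm

end

/-- For `R > 0`, `0 < c ≤ 1`, and `p` continuously differentiable and
1-periodic, define `f(x) = ((ln(xR))^c / (xR)) · p(log₂(ln(xR)))` on `(1/R, ∞)`. If
`f'(x)` tends to a finite limit as `x → (1/R)⁺`, then `p` is constant. -/
theorem stmt16 (R : ℝ) (hR : 0 < R) (c : ℝ) (hc0 : 0 < c) (hc1 : c ≤ 1)
    (p : ℝ → ℝ) (hp : ContDiff ℝ 1 p) (hper : ∀ s, p (s + 1) = p s)
    (f : ℝ → ℝ)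
    (hf : ∀ x, 1 / R < x →
      f x = ((Real.log (x * R)) ^ c / (x * R)) * p (Real.logb 2 (Real.log (x * R))))
    (L : ℝ)
    (hlim : Filter.Tendsto (deriv f) (nhdsWithin (1 / R) (Set.Ioi (1 / R))) (nhds L)) :
    ∀ s t, p s = p t := by
  replace hper : Function.Periodic p 1 := hper
  set K := 0 ^ (1 - c) / R * L
  have hq : ∀ s, c * p s + deriv p s / log 2 = K :=
    Function.Periodic.eq_of_tendsto_atBot (fun s => by simp only [hper s, hper.deriv s]) one_pos
      (tendsto_mul_add_deriv_div_log_two_atBot hR hc1 hp hper hf hlim)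
  have hlog2 : 0 < log 2 := log_pos one_lt_two
  have hcp : ∀ s, c * p s - K = 0 := by
    refine Function.Periodic.eq_zero_of_hasDerivAt_mul_self (a := -(c * log 2))
      (fun s => by simp only [hper s]) one_ne_zero (neg_ne_zero.mpr (mul_pos hc0 hlog2).ne')
      fun s => ?_
    refine (((hp.differentiable one_ne_zero s).hasDerivAt.const_mul c).sub_const K).congr_deriv ?_
    have := hq s
    field_simp at this
    linear_combination c * this
  intro s t
  exact mul_left_cancel₀ hc0.ne' (by linarith [hcp s, hcp t])
end
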